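/- arXiv:2203.04002 — 4 statements merged into one kernel-verified Lean document; each statement's English description precedes it below -/
import Mathlib

section
/- A vector v ∈ ℝ^d admits a (C₂, C_∞) short-flat decomposition (i.e., v = p + e with ‖p‖₂ ≤ C₂ and ‖e‖_∞ ≤ C_∞) if and only if ‖trunc(v, C_∞)‖₂ ≤ C₂, where trunc(v, c) is the soft-thresholding operator defined coordinatewise by [trunc(v,c)]_i = sgn(v_i)·max(|v_i| − c, 0). -/
/-! Coordinatewise, `trunc v c i` is a point of `[v i - c, v i + c]` of least absolute value,
so it is the shortest admissible `p`, and `e := v - trunc v c` is an admissible flat part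
when `0 ≤ c`. -/

open Classical Finset

/-- Soft-thresholding operator: `[trunc(v,c)]ᵢ = sgn(vᵢ)·max(|vᵢ| − c, 0)`. -/
noncomputable def trunc {d : ℕ} (v : Fin d → ℝ) (c : ℝ) : Fin d → ℝ :=
  fun i => Real.sign (v i) * max (|v i| - c) 0

lemma abs_trunc_apply_le {d : ℕ} (v : Fin d → ℝ) (c : ℝ) (i : Fin d) :
    |trunc v c i| ≤ max (|v i| - c) 0 := by
  rw [trunc, abs_mul, abs_of_nonneg (le_max_right (|v i| - c) 0)]
  rcases Real.sign_apply_eq (v i) with h | h | h <;> simp [h]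

lemma abs_trunc_apply_le_of_abs_sub_le {d : ℕ} (v : Fin d → ℝ) {c y : ℝ} (i : Fin d)
    (h : |v i - y| ≤ c) : |trunc v c i| ≤ |y| :=
  (abs_trunc_apply_le v c i).trans <|
    max_le (by linarith [abs_sub_abs_le_abs_sub (v i) y]) (abs_nonneg y)

lemma abs_sub_trunc_apply_le {d : ℕ} (v : Fin d → ℝ) {c : ℝ} (hc : 0 ≤ c) (i : Fin d) :
    |v i - trunc v c i| ≤ c := by
  rcases lt_trichotomy (v i) 0 with h | h | h
  · rw [trunc, Real.sign_of_neg h, abs_of_neg h, abs_le]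
    constructor <;> cases max_cases (-v i - c) 0 <;> linarith
  · simp [trunc, h, hc]
  · rw [trunc, Real.sign_of_pos h, abs_of_pos h, abs_le]
    constructor <;> cases max_cases (v i - c) 0 <;> linarith

/-- `v` has a `(C₂, C∞)` short-flat decomposition iff `‖trunc(v, C∞)‖₂ ≤ C₂`. -/
theorem short_flat_iff_trunc {d : ℕ} (v : Fin d → ℝ) (C2 Cinf : ℝ) (hCinf : 0 ≤ Cinf) :
    (∃ p e : Fin d → ℝ, v = p + e ∧ Real.sqrt (∑ i, p i ^ 2) ≤ C2 ∧ ∀ i, |e i| ≤ Cinf) ↔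
      Real.sqrt (∑ i, trunc v Cinf i ^ 2) ≤ C2 := by
  constructor
  · rintro ⟨p, e, rfl, hp, he⟩
    refine (Real.sqrt_le_sqrt (sum_le_sum fun i _ => sq_le_sq.2 ?_)).trans hp
    exact abs_trunc_apply_le_of_abs_sub_le _ i (by simpa using he i)
  · intro h
    exact ⟨trunc v Cinf, v - trunc v Cinf, (add_sub_cancel _ _).symm, h,
      abs_sub_trunc_apply_le v hCinf⟩
end

section
/- Let A ∈ ℝ^{n×d} satisfy the (s, c)-restricted isometry property, i.e., for every s-sparse vector w ∈ ℝ^d, (1/c)‖w‖₂² ≤ ‖Aw‖₂² ≤ c‖w‖₂². Then, for any u ∈ ℝ^n, the ℓ₂ norm of the s largest entries (in absolute value) of Aᵀu is at most c‖u‖₂. -/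
/-!
Let `v = Aᵀu` and let `w` be `v` restricted to `S`, an `s`-sparse vector. Then
`‖w‖² = ⟨v, w⟩ = ⟨u, Aw⟩ ≤ ‖u‖ ‖Aw‖ ≤ √c ‖u‖ ‖w‖` by the upper RIP bound, so `‖w‖ ≤ √c ‖u‖`.
Finally `√c ≤ c`, because the two RIP bounds at a basis vector give `1 / c ≤ c`.
-/

open Classical Finset

namespace Matrix

variable {m ι : Type*} [Fintype m] [Fintype ι]

def IsRIP (A : Matrix m ι ℝ) (s : ℕ) (c : ℝ) : Prop :=
  ∀ w : ι → ℝ, (Finset.univ.filter fun j => w j ≠ 0).card ≤ s →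
    (1 / c) * ∑ j, w j ^ 2 ≤ ∑ i, (A *ᵥ w) i ^ 2 ∧
    ∑ i, (A *ᵥ w) i ^ 2 ≤ c * ∑ j, w j ^ 2

theorem IsRIP.one_le {A : Matrix m ι ℝ} {s : ℕ} {c : ℝ} (hA : A.IsRIP s c) (hc : 0 < c)
    (hs : 1 ≤ s) (j : ι) : 1 ≤ c := by
  have hsupp : (univ.filter fun k => (Pi.single j 1 : ι → ℝ) k ≠ 0).card ≤ s := by
    refine (card_le_one.2 fun a ha b hb => ?_).trans hs
    simp only [mem_filter, mem_univ, true_and, Pi.single_apply, ne_eq, ite_eq_right_iff,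
      one_ne_zero, imp_false, not_not] at ha hb
    rw [ha, hb]
  obtain ⟨hlow, hup⟩ := hA _ hsupp
  have hnorm : ∑ k, (Pi.single j 1 : ι → ℝ) k ^ 2 = 1 := by
    simp [Pi.single_apply, sq]
  rw [hnorm, mul_one] at hlow hup
  have : 1 / c ≤ c := hlow.trans hup
  rw [div_le_iff₀ hc] at this
  nlinarith

theorem dotProduct_transpose_mulVec_le {A : Matrix m ι ℝ} {c : ℝ} (hc : 0 ≤ c) (u : m → ℝ)
    {w : ι → ℝ} (hw : ∑ i, (A *ᵥ w) i ^ 2 ≤ c * ∑ j, w j ^ 2) :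
    (Aᵀ *ᵥ u) ⬝ᵥ w ≤ √c * √(∑ j, w j ^ 2) * √(∑ i, u i ^ 2) :=
  calc (Aᵀ *ᵥ u) ⬝ᵥ w = ∑ i, (A *ᵥ w) i * u i := by
        rw [mulVec_transpose, ← dotProduct_mulVec, dotProduct_comm]; rfl
    _ ≤ √(∑ i, (A *ᵥ w) i ^ 2) * √(∑ i, u i ^ 2) := Real.sum_mul_le_sqrt_mul_sqrt _ _ _
    _ ≤ √(c * ∑ j, w j ^ 2) * √(∑ i, u i ^ 2) := by gcongr
    _ = √c * √(∑ j, w j ^ 2) * √(∑ i, u i ^ 2) := by rw [Real.sqrt_mul hc]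

theorem IsRIP.sqrt_sum_sq_transpose_mulVec_le {A : Matrix m ι ℝ} {s : ℕ} {c : ℝ}
    (hA : A.IsRIP s c) (hc : 0 ≤ c) (u : m → ℝ) {S : Finset ι} (hS : S.card ≤ s) :
    √(∑ j ∈ S, (Aᵀ *ᵥ u) j ^ 2) ≤ √c * √(∑ i, u i ^ 2) := by
  set v := Aᵀ *ᵥ u
  set w : ι → ℝ := fun j => if j ∈ S then v j else 0
  have hsupp : (univ.filter fun j => w j ≠ 0).card ≤ s := by
    refine (card_le_card fun j hj => ?_).trans hS
    by_contra hjS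
    simp [w, hjS] at hj
  have hnorm : ∑ j, w j ^ 2 = ∑ j ∈ S, v j ^ 2 := by
    simp only [w, ite_pow, ne_eq, OfNat.ofNat_ne_zero, not_false_eq_true, zero_pow,
      sum_ite_mem_eq]
  have hdot : v ⬝ᵥ w = ∑ j ∈ S, v j ^ 2 := by
    simp only [dotProduct, w, mul_ite, mul_zero, sum_ite_mem_eq, sq]
  have key := dotProduct_transpose_mulVec_le hc u (hA w hsupp).2
  rw [hnorm, hdot] at key
  rcases (Real.sqrt_nonneg (∑ j ∈ S, v j ^ 2)).eq_or_lt with h0 | hpos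
  · rw [← h0]; positivity
  · refine le_of_mul_le_mul_right ?_ hpos
    rw [Real.mul_self_sqrt (sum_nonneg fun _ _ => sq_nonneg _)]
    linarith

end Matrix

/-- If `A` is `(s, c)`-RIP, then for any `u ∈ ℝⁿ`, the ℓ₂ norm of the `s` largest
entries (in absolute value) of `Aᵀu` is at most `c‖u‖₂`; equivalently, the ℓ₂ norm
of `Aᵀu` restricted to any `s` coordinates is at most `c‖u‖₂`. -/
theorem rip_transpose_topk_bound {n d s : ℕ} (c : ℝ) (hc : 0 < c)
    (A : Matrix (Fin n) (Fin d) ℝ)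
    (hRIP : ∀ w : Fin d → ℝ, (Finset.univ.filter fun j => w j ≠ 0).card ≤ s →
      (1 / c) * ∑ j, w j ^ 2 ≤ ∑ i, (A.mulVec w i) ^ 2 ∧
      ∑ i, (A.mulVec w i) ^ 2 ≤ c * ∑ j, w j ^ 2)
    (u : Fin n → ℝ) :
    ∀ S : Finset (Fin d), S.card ≤ s →
      Real.sqrt (∑ j ∈ S, (A.transpose.mulVec u j) ^ 2) ≤ c * Real.sqrt (∑ i, u i ^ 2) := by
  have hA : A.IsRIP s c := hRIP
  intro S hS
  rcases S.eq_empty_or_nonempty with rfl | ⟨j, hj⟩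
  · simp only [sum_empty, Real.sqrt_zero]
    positivity
  have hc1 : 1 ≤ c := hA.one_le hc ((card_pos.2 ⟨j, hj⟩).trans_le hS) j
  calc _ ≤ √c * √(∑ i, u i ^ 2) :=
        hA.sqrt_sum_sq_transpose_mulVec_le hc.le u hS
    _ ≤ c * √(∑ i, u i ^ 2) := by
        gcongr
        exact Real.sqrt_le_self_iff.2 (Or.inr hc1)
end

section
/- Let w ∈ ℝ^n be a nonnegative weight vector with Σᵢ wᵢ = 1 and max_i wᵢ ≤ 1/m for an integer m ≤ n, and let ξ ∈ ℝ^n. Then Σ_{i∈[n]} wᵢ ξᵢ² ≤ (1/m)·‖ξ‖_{2,(m)}², where ‖ξ‖_{2,(m)} is the ℓ₂ norm of the m largest entries of ξ in absolute value. -/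
/-!
Let `S` be the indices of the `m` largest values of `a = ξ²` and `t` a threshold separating
them from the rest. Then `∑ wᵢ aᵢ = t + ∑ wᵢ (aᵢ - t)`; the terms outside `S` are nonpositive,
and on `S` the weight `wᵢ ≤ 1/m` multiplies a nonnegative factor, so the sum is at most
`t + (1/m) ∑_{i ∈ S} (aᵢ - t) = (1/m) ∑_{i ∈ S} aᵢ`.
-/

open Classical Finset

theorem Finset.exists_subset_card_eq_forall_le {α β : Type*} [DecidableEq α] [LinearOrder β]
    (f : α → β) {s : Finset α} {m : ℕ} (hm : m ≤ #s) :
    ∃ t ⊆ s, #t = m ∧ ∀ i ∈ t, ∀ j ∈ s \ t, f j ≤ f i := by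
  induction m generalizing s with
  | zero => exact ⟨∅, empty_subset s, rfl, by simp⟩
  | succ k ih =>
    obtain ⟨x, hxs, hxmax⟩ := s.exists_max_image f (card_pos.mp (by omega))
    obtain ⟨t, hts, htcard, htop⟩ := ih (s := s.erase x) (by rw [card_erase_of_mem hxs]; omega)
    have hxt : x ∉ t := fun h => (mem_erase.mp (hts h)).1 rfl
    refine ⟨insert x t, insert_subset hxs (hts.trans (erase_subset x s)),
      by rw [card_insert_of_notMem hxt, htcard], ?_⟩
    intro i hi j hj
    obtain ⟨hjs, hjxt⟩ := mem_sdiff.mp hj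
    rcases mem_insert.mp hi with rfl | hit
    · exact hxmax j hjs
    · refine htop i hit j (mem_sdiff.mpr ⟨mem_erase.mpr ⟨?_, hjs⟩, fun h => hjxt (mem_insert_of_mem h)⟩)
      rintro rfl
      exact hjxt (mem_insert_self j t)

theorem sum_mul_le_inv_card_mul_sum_of_threshold {ι : Type*} [Fintype ι] {w a : ι → ℝ}
    {S : Finset ι} {t : ℝ} (hw0 : ∀ i, 0 ≤ w i) (hw1 : ∑ i, w i = 1)
    (hwS : ∀ i, w i ≤ (#S : ℝ)⁻¹) (hS : ∀ i ∈ S, t ≤ a i) (hSc : ∀ j ∉ S, a j ≤ t) :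
    ∑ i, w i * a i ≤ (#S : ℝ)⁻¹ * ∑ i ∈ S, a i := by
  have hS0 : (#S : ℝ) ≠ 0 := by
    intro h
    have : ∑ i, w i ≤ 0 := sum_nonpos fun i _ => by simpa [h] using hwS i
    linarith
  have hcompl : ∑ j ∈ Sᶜ, w j * (a j - t) ≤ 0 := sum_nonpos fun j hj =>
    mul_nonpos_of_nonneg_of_nonpos (hw0 j) (sub_nonpos.mpr (hSc j (mem_compl.mp hj)))
  calc ∑ i, w i * a i = ∑ i ∈ S, w i * (a i - t) + ∑ j ∈ Sᶜ, w j * (a j - t) + t := by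
        rw [sum_add_sum_compl]
        simp only [mul_sub, sum_sub_distrib, ← sum_mul, hw1]
        ring
    _ ≤ ∑ i ∈ S, (#S : ℝ)⁻¹ * (a i - t) + t := by
        have : ∑ i ∈ S, w i * (a i - t) ≤ ∑ i ∈ S, (#S : ℝ)⁻¹ * (a i - t) := sum_le_sum
          fun i hi => mul_le_mul_of_nonneg_right (hwS i) (sub_nonneg.mpr (hS i hi))
        linarith
    _ = (#S : ℝ)⁻¹ * ∑ i ∈ S, a i := by
        rw [← mul_sum, sum_sub_distrib, sum_const, nsmul_eq_mul]
        field_simp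
        ring

theorem sum_mul_le_inv_card_mul_sum_of_forall_le {ι : Type*} [Fintype ι] {w a : ι → ℝ}
    {S : Finset ι} (hw0 : ∀ i, 0 ≤ w i) (hw1 : ∑ i, w i = 1)
    (hwS : ∀ i, w i ≤ (#S : ℝ)⁻¹) (hS : ∀ i ∈ S, ∀ j ∉ S, a j ≤ a i) :
    ∑ i, w i * a i ≤ (#S : ℝ)⁻¹ * ∑ i ∈ S, a i := by
  rcases S.eq_empty_or_nonempty with rfl | hSne
  · have : ∑ i, w i ≤ 0 := sum_nonpos fun i _ => by simpa using hwS i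
    linarith
  exact sum_mul_le_inv_card_mul_sum_of_threshold hw0 hw1 hwS (fun i hi => inf'_le a hi)
    fun j hj => le_inf' hSne a fun i hi => hS i hi j hj

theorem weighted_noise_bound_general {n m : ℕ} (hmn : m ≤ n) (w ξ : Fin n → ℝ)
    (hw0 : ∀ i, 0 ≤ w i) (hw1 : ∑ i, w i = 1) (hwinf : ∀ i, w i ≤ 1 / (m : ℝ)) :
    ∑ i, w i * ξ i ^ 2 ≤ (1 / (m : ℝ)) *
      sSup { r : ℝ | ∃ S : Finset (Fin n), S.card = m ∧ r = ∑ i ∈ S, ξ i ^ 2 } := by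
  obtain ⟨S, -, hScard, hStop⟩ :=
    exists_subset_card_eq_forall_le (fun i => ξ i ^ 2) (s := univ) (by simpa using hmn)
  have hbdd : BddAbove { r : ℝ | ∃ S : Finset (Fin n), S.card = m ∧ r = ∑ i ∈ S, ξ i ^ 2 } :=
    ((Set.finite_range fun T : Finset (Fin n) => ∑ i ∈ T, ξ i ^ 2).subset
      (by rintro r ⟨T, -, rfl⟩; exact ⟨T, rfl⟩)).bddAbove
  calc ∑ i, w i * ξ i ^ 2 ≤ (1 / (m : ℝ)) * ∑ i ∈ S, ξ i ^ 2 := by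
        simpa [hScard] using sum_mul_le_inv_card_mul_sum_of_forall_le hw0 hw1
          (by simpa [hScard] using hwinf) fun i hi j hj => hStop i hi j (by simpa using hj)
    _ ≤ _ := by
        gcongr
        exact le_csSup hbdd ⟨S, hScard, rfl⟩

/-- If `w` lies in the simplex with `‖w‖∞ ≤ 1/m`, then `∑ᵢ wᵢξᵢ² ≤ (1/m)‖ξ‖_{2,(m)}²`,
where `‖ξ‖_{2,(m)}²` is the largest possible sum of `m` squared entries of `ξ`. -/
theorem weighted_noise_bound {n m : ℕ} (hm : 0 < m) (hmn : m ≤ n) (w ξ : Fin n → ℝ)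
    (hw0 : ∀ i, 0 ≤ w i) (hw1 : ∑ i, w i = 1) (hwinf : ∀ i, w i ≤ 1 / (m : ℝ)) :
    ∑ i, w i * ξ i ^ 2 ≤ (1 / (m : ℝ)) *
      sSup { r : ℝ | ∃ S : Finset (Fin n), S.card = m ∧ r = ∑ i ∈ S, ξ i ^ 2 } :=
  weighted_noise_bound_general hmn w ξ hw0 hw1 hwinf
end

section
/- Let B ∈ ℝ^{n×d} be (s', c)-RIP and let v ∈ ℝ^d satisfy NS(v) ≤ σ. Then ‖Bv‖₂ ≤ c·(1 + √(σ/s'))·‖v‖₂. -/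
/-!
Split the support of `v` into consecutive blocks of `s'` coordinates, in decreasing order of
`|v i|`. Every entry of a block is at most the average of `|v i|` on the previous (full) block, so the `ℓ²` norm of each block after the first is at most `1/√s'` times the `ℓ¹` norm of its
predecessor. Applying the RIP upper bound to each block and the triangle inequality gives
`‖Bv‖ ≤ √c (‖v‖₂ + ‖v‖₁/√s') ≤ √c (1 + √(σ/s')) ‖v‖₂`, and `√c ≤ c` because RIP forces `c ≥ 1`.
-/

open Classical Finset

theorem Finset.exists_subset_card_eq_forall_mem_sdiff_le {α β : Type*} [LinearOrder β]
    (f : α → β) {S : Finset α} {k : ℕ} (hk : k ≤ #S) :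
    ∃ T ⊆ S, #T = k ∧ ∀ i ∈ T, ∀ j ∈ S \ T, f j ≤ f i := by
  induction k with
  | zero => exact ⟨∅, empty_subset S, card_empty, by simp⟩
  | succ k ih =>
    obtain ⟨T, hTS, hTk, hT⟩ := ih (by omega)
    have hne : (S \ T).Nonempty := by
      rw [← card_pos, card_sdiff_of_subset hTS]
      omega
    obtain ⟨m, hm, hmax⟩ := (S \ T).exists_max_image f hne
    rw [mem_sdiff] at hm
    refine ⟨insert m T, insert_subset hm.1 hTS, by rw [card_insert_of_notMem hm.2, hTk], ?_⟩
    intro i hi j hj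
    rw [sdiff_insert] at hj
    rcases mem_insert.1 hi with rfl | hi
    · exact hmax j (mem_of_mem_erase hj)
    · exact hT i hi j (mem_of_mem_erase hj)

theorem sqrt_sum_sq_le_of_abs_le {ι : Type*} {T : Finset ι} {v : ι → ℝ} {b : ℝ} {s : ℕ}
    (hb : 0 ≤ b) (hT : #T ≤ s) (hv : ∀ i ∈ T, |v i| ≤ b) :
    √(∑ i ∈ T, v i ^ 2) ≤ b * √s := by
  rw [Real.sqrt_le_left (by positivity), mul_pow, Real.sq_sqrt s.cast_nonneg]
  calc ∑ i ∈ T, v i ^ 2 ≤ ∑ _i ∈ T, b ^ 2 :=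
        sum_le_sum fun i hi => sq_le_sq' (abs_le.1 (hv i hi)).1 (abs_le.1 (hv i hi)).2
    _ = #T * b ^ 2 := by rw [sum_const, nsmul_eq_mul]
    _ ≤ b ^ 2 * s := by rw [mul_comm]; gcongr

section Shelling

variable {ι E : Type*} [SeminormedAddCommGroup E] {L : (ι → ℝ) →+ E} {s : ℕ} {K : ℝ}

theorem norm_map_indicator_le_of_sparse_bound (hs : 0 < s) (hK : 0 ≤ K)
    (hL : ∀ (w : ι → ℝ) (T : Finset ι), #T ≤ s →
      ‖L ((T : Set ι).indicator w)‖ ≤ K * √(∑ i ∈ T, w i ^ 2))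
    (v : ι → ℝ) (S : Finset ι) {a : ℝ}
    (ha : ∀ T ⊆ S, #T ≤ s → √(∑ i ∈ T, v i ^ 2) ≤ a) :
    ‖L ((S : Set ι).indicator v)‖ ≤ K * (a + (∑ i ∈ S, |v i|) / √s) := by
  -- `a` bounds the first block. Peeling off the top `s` entries `T`, the rest is entrywise at most
  -- the average `b` over `T`, so `b √s = ‖v_T‖₁ / √s` bounds the next block.
  induction S using Finset.strongInduction generalizing a with
  | H S ih =>
  have ha0 : 0 ≤ a := (Real.sqrt_nonneg _).trans (ha ∅ (empty_subset S) (by simp))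
  by_cases hS : #S ≤ s
  · calc ‖L ((S : Set ι).indicator v)‖ ≤ K * a :=
          (hL v S hS).trans (by gcongr; exact ha S subset_rfl hS)
      _ ≤ K * (a + (∑ i ∈ S, |v i|) / √s) := by
          gcongr; exact le_add_of_nonneg_right (by positivity)
  obtain ⟨T, hTS, hTs, hTtop⟩ :=
    S.exists_subset_card_eq_forall_mem_sdiff_le (|v ·|) (k := s) (by omega)
  set b := (∑ i ∈ T, |v i|) / s
  have hb : ∀ j ∈ S \ T, |v j| ≤ b := by
    intro j hj
    rw [le_div_iff₀ (by positivity), mul_comm, ← nsmul_eq_mul, ← hTs]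
    exact card_nsmul_le_sum T (|v ·|) _ fun i hi => hTtop i hi j hj
  have hR := ih (S \ T) (sdiff_ssubset hTS (card_pos.1 (hTs ▸ hs))) (a := b * √s)
    fun T' hT' hT's => sqrt_sum_sq_le_of_abs_le (by positivity) hT's fun i hi => hb i (hT' hi)
  have hsplit :
      (S : Set ι).indicator v = (T : Set ι).indicator v + (↑(S \ T) : Set ι).indicator v := by
    conv_lhs => rw [← union_sdiff_of_subset hTS, coe_union,
      Set.indicator_union_of_disjoint (disjoint_coe.2 disjoint_sdiff)]
    rfl
  have hb_eq : b * √s = (∑ i ∈ T, |v i|) / √s := by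
    rw [div_mul_eq_mul_div, mul_div_assoc, Real.sqrt_div_self', mul_one_div]
  calc ‖L ((S : Set ι).indicator v)‖
      ≤ ‖L ((T : Set ι).indicator v)‖ + ‖L ((↑(S \ T) : Set ι).indicator v)‖ := by
        rw [hsplit, map_add]; exact norm_add_le _ _
    _ ≤ K * a + K * (b * √s + (∑ i ∈ S \ T, |v i|) / √s) :=
        add_le_add ((hL v T hTs.le).trans (by gcongr; exact ha T hTS hTs.le)) hR
    _ = K * (a + (∑ i ∈ S, |v i|) / √s) := by rw [hb_eq, ← sum_sdiff hTS]; ring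

theorem norm_map_le_of_sparse_bound [Fintype ι] (hs : 0 < s) (hK : 0 ≤ K)
    (hL : ∀ (w : ι → ℝ) (T : Finset ι), #T ≤ s →
      ‖L ((T : Set ι).indicator w)‖ ≤ K * √(∑ i ∈ T, w i ^ 2))
    (v : ι → ℝ) : ‖L v‖ ≤ K * (√(∑ i, v i ^ 2) + (∑ i, |v i|) / √s) := by
  simpa using norm_map_indicator_le_of_sparse_bound hs hK hL v univ fun T _ _ =>
    Real.sqrt_le_sqrt (sum_le_sum_of_subset_of_nonneg (subset_univ T) fun i _ _ => sq_nonneg (v i))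

end Shelling

theorem sqrt_sum_sq_eq_norm_toLp {m : Type*} [Fintype m] (f : m → ℝ) :
    √(∑ i, f i ^ 2) = ‖WithLp.toLp 2 f‖ := by
  simp [EuclideanSpace.norm_eq]

theorem sqrt_sum_mulVec_indicator_sq_le {m ι : Type*} [Fintype m] [Fintype ι]
    {B : Matrix m ι ℝ} {c : ℝ} {s : ℕ} (hc : 0 ≤ c)
    (hB : ∀ w : ι → ℝ, (univ.filter fun j => w j ≠ 0).card ≤ s →
      ∑ i, B.mulVec w i ^ 2 ≤ c * ∑ j, w j ^ 2)
    (w : ι → ℝ) {T : Finset ι} (hT : #T ≤ s) :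
    √(∑ i, B.mulVec ((T : Set ι).indicator w) i ^ 2) ≤ √c * √(∑ i ∈ T, w i ^ 2) := by
  have hsupp : (univ.filter fun j => (T : Set ι).indicator w j ≠ 0) ⊆ T := fun j hj => by
    by_contra hjT
    simp only [mem_filter, mem_univ, true_and] at hj
    exact hj (Set.indicator_of_notMem (mem_coe.not.2 hjT) w)
  have hsq : ∑ j, (T : Set ι).indicator w j ^ 2 = ∑ i ∈ T, w i ^ 2 := by
    rw [← sum_indicator_subset _ (subset_univ T)]
    exact sum_congr rfl fun j _ => by by_cases hj : j ∈ T <;> simp [hj]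
  rw [← Real.sqrt_mul hc, ← hsq]
  exact Real.sqrt_le_sqrt (hB _ ((card_le_card hsupp).trans hT))

theorem one_le_of_rip {m ι : Type*} [Fintype m] [Fintype ι] [Nonempty ι]
    {B : Matrix m ι ℝ} {c : ℝ} {s : ℕ} (hs : 0 < s) (hc : 0 < c)
    (hB : ∀ w : ι → ℝ, (univ.filter fun j => w j ≠ 0).card ≤ s →
      (1 / c) * ∑ j, w j ^ 2 ≤ ∑ i, B.mulVec w i ^ 2 ∧
      ∑ i, B.mulVec w i ^ 2 ≤ c * ∑ j, w j ^ 2) :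
    1 ≤ c := by
  obtain ⟨j⟩ := ‹Nonempty ι›
  let e : ι → ℝ := Pi.single j 1
  have hsparse : (univ.filter fun i => e i ≠ 0).card ≤ s :=
    (card_le_card (t := {j}) fun i hi => by by_contra h; simp_all [e]).trans
      (by rw [card_singleton]; exact hs)
  have hsingle := hB e hsparse
  have hpos : 0 < ∑ i, e i ^ 2 := by simp [e, Pi.single_apply]
  have h : 1 / c ≤ c := le_of_mul_le_mul_right (hsingle.1.trans hsingle.2) hpos
  rw [div_le_iff₀ hc] at h
  nlinarith

theorem rip_numerically_sparse_upper_general {n d s' : ℕ} (hs' : 0 < s') (c σ : ℝ)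
    (hc : 0 < c) (B : Matrix (Fin n) (Fin d) ℝ)
    (hRIP : ∀ w : Fin d → ℝ, (Finset.univ.filter fun j => w j ≠ 0).card ≤ s' →
      (1 / c) * ∑ j, w j ^ 2 ≤ ∑ i, (B.mulVec w i) ^ 2 ∧
      ∑ i, (B.mulVec w i) ^ 2 ≤ c * ∑ j, w j ^ 2)
    (v : Fin d → ℝ) (hNS : (∑ j, |v j|) ^ 2 ≤ σ * ∑ j, v j ^ 2) :
    Real.sqrt (∑ i, (B.mulVec v i) ^ 2) ≤
      c * (1 + Real.sqrt (σ / s')) * Real.sqrt (∑ j, v j ^ 2) := by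
  obtain hd | hd := isEmpty_or_nonempty (Fin d)
  · simp [Subsingleton.elim v 0]
  let L : (Fin d → ℝ) →+ EuclideanSpace ℝ (Fin n) :=
    (WithLp.linearEquiv 2 ℝ (Fin n → ℝ)).symm.toAddMonoidHom.comp B.mulVecLin.toAddMonoidHom
  have hL : ∀ (w : Fin d → ℝ) (T : Finset (Fin d)), #T ≤ s' →
      ‖L ((T : Set (Fin d)).indicator w)‖ ≤ √c * √(∑ i ∈ T, w i ^ 2) := fun w T hT => by
    simpa [L, sqrt_sum_sq_eq_norm_toLp] using
      sqrt_sum_mulVec_indicator_sq_le hc.le (fun w hw => (hRIP w hw).2) w hT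
  have hL1 : ∑ j, |v j| ≤ √σ * √(∑ j, v j ^ 2) := by
    rw [← Real.sqrt_mul' σ (by positivity)]
    exact Real.le_sqrt_of_sq_le hNS
  calc √(∑ i, B.mulVec v i ^ 2) = ‖L v‖ := by simp [L, sqrt_sum_sq_eq_norm_toLp]
    _ ≤ √c * (√(∑ j, v j ^ 2) + (∑ j, |v j|) / √s') :=
        norm_map_le_of_sparse_bound hs' (Real.sqrt_nonneg c) hL v
    _ ≤ √c * ((1 + √(σ / s')) * √(∑ j, v j ^ 2)) := by
        rw [Real.sqrt_div' σ s'.cast_nonneg, add_mul, one_mul, div_mul_eq_mul_div]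
        gcongr
    _ ≤ c * (1 + √(σ / s')) * √(∑ j, v j ^ 2) := by
        rw [mul_assoc]
        gcongr
        exact Real.sqrt_le_self_iff.2 (Or.inr (one_le_of_rip hs' hc hRIP))

/-- If `B` is `(s', c)`-RIP and `NS(v) ≤ σ`, then `‖Bv‖₂ ≤ c(1 + √(σ/s'))‖v‖₂`. -/
theorem rip_numerically_sparse_upper {n d s' : ℕ} (hs' : 0 < s') (c σ : ℝ)
    (hc : 0 < c) (hσ : 0 ≤ σ) (B : Matrix (Fin n) (Fin d) ℝ)
    (hRIP : ∀ w : Fin d → ℝ, (Finset.univ.filter fun j => w j ≠ 0).card ≤ s' →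
      (1 / c) * ∑ j, w j ^ 2 ≤ ∑ i, (B.mulVec w i) ^ 2 ∧
      ∑ i, (B.mulVec w i) ^ 2 ≤ c * ∑ j, w j ^ 2)
    (v : Fin d → ℝ) (hNS : (∑ j, |v j|) ^ 2 ≤ σ * ∑ j, v j ^ 2) :
    Real.sqrt (∑ i, (B.mulVec v i) ^ 2) ≤
      c * (1 + Real.sqrt (σ / s')) * Real.sqrt (∑ j, v j ^ 2) :=
  rip_numerically_sparse_upper_general hs' c σ hc B hRIP v hNS
end
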